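/- Let G=(V,E,R,x,η) be a knowledge graph where x is a feature map and η is a pairwise coloring satisfying target node distinguishability, and let q ∈ R be a query relation. Then for every T ≥ 0 and every history function f, there exists a C-MPNN with T layers and history function f such that for all 0 ≤ t ≤ T, the coloring rawl_2^{(t)} is equivalent to h_q^{(t)}: for all u,v,u',v' ∈ V, rawl_2^{(t)}(u,v) = rawl_2^{(t)}(u',v') if and only if h_q^{(t)}(u,v) = h_q^{(t)}(u',v'). -/

import Mathlib

/-- A knowledge graph: a finite set of facts `r(u,v)` (stored as triples `(r,u,v)`)
together with a node coloring. -/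
structure KG (V R D : Type) where
  edges : Finset (R × V × V)
  color : V → D

namespace KG

variable {V R D D₂ X : Type}

/-- For a fact `r(u,v)` we say `u ∈ N_r(v)`.  `G.msgMS g v` is the multiset
`{{ (g w, r) : w ∈ N_r(v), r ∈ R }}`. -/
def msgMS [DecidableEq V] (G : KG V R D) (g : V → X) (v : V) : Multiset (X × R) :=
  (G.edges.val.filter (fun e => e.2.2 = v)).map (fun e => (g e.2.1, e.1))

end KG

/-- Color type of the relational local 1-WL test after `t` rounds (τ is the identity pairing). -/
def Color1 (D R : Type) : ℕ → Type
  | 0 => D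
  | t + 1 => Color1 D R t × Multiset (Color1 D R t × R)

/-- The relational local 1-WL test `rwl₁`. -/
def rwl1 {V R D : Type} [DecidableEq V] (G : KG V R D) : (t : ℕ) → V → Color1 D R t
  | 0 => G.color
  | t + 1 => fun v => (rwl1 G t v, G.msgMS (rwl1 G t) v)

/-- The relational asymmetric local 2-WL test `rawl₂` with initial pairwise coloring `η`. -/
def rawl2 {V R D D₂ : Type} [DecidableEq V] (G : KG V R D) (η : V → V → D₂) :
    (t : ℕ) → V → V → Color1 D₂ R t
  | 0 => η
  | t + 1 => fun u v => (rawl2 G η t u v, G.msgMS (rawl2 G η t u) v)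

/-- Color type of the relational symmetric local 2-WL test after `t` rounds. -/
def Color2 (D R : Type) : ℕ → Type
  | 0 => D
  | t + 1 => Color2 D R t × Multiset (Color2 D R t × R) × Multiset (Color2 D R t × R)

/-- The relational symmetric local 2-WL test `rwl₂` with initial pairwise coloring `η`. -/
def rwl2 {V R D D₂ : Type} [DecidableEq V] (G : KG V R D) (η : V → V → D₂) :
    (t : ℕ) → V → V → Color2 D₂ R t
  | 0 => η
  | t + 1 => fun u v =>
      (rwl2 G η t u v, G.msgMS (fun w => rwl2 G η t w v) u, G.msgMS (rwl2 G η t u) v)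

/-- The augmented knowledge graph `G⁺` with fresh inverse relations (`Sum.inr r` is `r⁻`). -/
def KG.aug {V R D : Type} [DecidableEq V] [DecidableEq R] (G : KG V R D) : KG V (R ⊕ R) D where
  edges := G.edges.image (fun e => (Sum.inl e.1, e.2)) ∪
    (G.edges.filter (fun e => e.2.1 ≠ e.2.2)).image (fun e => (Sum.inr e.1, e.2.2, e.2.1))
  color := G.color

/-- The graph `G²` of pairs: facts `r((u,w),(u,v))` for `r(w,v) ∈ E`, colored by `η`. -/
def KG.sq {V R D D₂ : Type} [Fintype V] [DecidableEq V] [DecidableEq R]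
    (G : KG V R D) (η : V → V → D₂) : KG (V × V) R D₂ where
  edges := (Finset.univ ×ˢ G.edges).image
      (fun p => (p.2.1, (p.1, p.2.2.1), (p.1, p.2.2.2)))
  color := fun p => η p.1 p.2

/-- A relational message passing neural network (R-MPNN) with feature dimensions `d t`:
a history function `f` (non-decreasing, `f t ≤ t`) and, per layer, arbitrary
relation-specific message functions, an aggregation on finite multisets and an update. -/
structure RMPNN (R : Type) (d : ℕ → ℕ) where
  f : ℕ → ℕ
  f_mono : Monotone f
  f_le : ∀ t, f t ≤ t
  M : ℕ → Type
  A : ℕ → Type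
  msg : (t : ℕ) → R → (Fin (d t) → ℝ) → M t
  agg : (t : ℕ) → Multiset (M t) → A t
  upd : (t : ℕ) → (Fin (d (f t)) → ℝ) → A t → Fin (d (t + 1)) → ℝ

/-- Features `h^(t)_v` computed by an R-MPNN on `G` from initial features `x`. -/
def RMPNN.h {V R D : Type} [DecidableEq V] {d : ℕ → ℕ} (N : RMPNN R d) (G : KG V R D)
    (x : V → Fin (d 0) → ℝ) : (t : ℕ) → V → Fin (d t) → ℝ
  | 0 => x
  | t + 1 => fun v =>
      N.upd t (N.h G x (N.f t) v)
        (N.agg t ((G.edges.val.filter (fun e => e.2.2 = v)).map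
          (fun e => N.msg t e.1 (N.h G x t e.2.1))))
termination_by t => t
decreasing_by
  · exact Nat.lt_succ_of_le (N.f_le t)
  · exact Nat.lt_succ_self t

/-- A conditional message passing neural network (C-MPNN) with feature dimensions `d t`;
the relation-specific message functions additionally take the query relation. -/
structure CMPNN (R : Type) (d : ℕ → ℕ) where
  f : ℕ → ℕ
  f_mono : Monotone f
  f_le : ∀ t, f t ≤ t
  M : ℕ → Type
  A : ℕ → Type
  msg : (t : ℕ) → R → (Fin (d t) → ℝ) → R → M t
  agg : (t : ℕ) → Multiset (M t) → A t
  upd : (t : ℕ) → (Fin (d (f t)) → ℝ) → A t → Fin (d (t + 1)) → ℝ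

/-- Features `h^(t)_{v|u,q}` computed by a C-MPNN on `G` for query `q` with
initialization `δ`; `CMPNN.h N G q δ t u v = h_q^(t)(u,v)`. -/
def CMPNN.h {V R D : Type} [DecidableEq V] {d : ℕ → ℕ} (N : CMPNN R d) (G : KG V R D)
    (q : R) (δ : V → V → R → Fin (d 0) → ℝ) : (t : ℕ) → V → V → Fin (d t) → ℝ
  | 0 => fun u v => δ u v q
  | t + 1 => fun u v =>
      N.upd t (N.h G q δ (N.f t) u v)
        (N.agg t ((G.edges.val.filter (fun e => e.2.2 = v)).map
          (fun e => N.msg t e.1 (N.h G q δ t u e.2.1) q)))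
termination_by t => t
decreasing_by
  · exact Nat.lt_succ_of_le (N.f_le t)
  · exact Nat.lt_succ_self t

/-!
The network carries, in a single real coordinate, a code of the current `rawl₂` color; since
`V × V` is finite, each round has finitely many colors and such codes exist. The update recovers
the next color from the code of the color at round `f t` and the multiset of neighbour codes at
round `t`: this is possible for any history function because the message multiset at round `t`
determines all earlier ones by projection, so together with any earlier color it determines
the color at round `t + 1`.
-/

theorem Multiset.eq_of_map_eq_of_injOn {α β : Type*} {f : α → β} {s : Set α} (hf : s.InjOn f)
    {m₁ m₂ : Multiset α} (h₁ : ∀ a ∈ m₁, a ∈ s) (h₂ : ∀ a ∈ m₂, a ∈ s)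
    (h : m₁.map f = m₂.map f) : m₁ = m₂ := by
  rcases Multiset.empty_or_exists_mem m₁ with rfl | ⟨a, -⟩
  · simpa [eq_comm] using h
  have : Nonempty α := ⟨a⟩
  have hinv : ∀ m : Multiset α, (∀ a ∈ m, a ∈ s) → (m.map f).map (Function.invFunOn f s) = m :=
    fun m hm => by
      rw [Multiset.map_map]
      exact (Multiset.map_congr rfl fun a ha => hf.leftInvOn_invFunOn (hm a ha)).trans m.map_id
  rw [← hinv m₁ h₁, h, hinv m₂ h₂]

namespace KG

variable {V R D X Y : Type} [DecidableEq V]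

theorem msgMS_comp (G : KG V R D) (φ : X → Y) (g : V → X) (v : V) :
    G.msgMS (φ ∘ g) v = (G.msgMS g v).map (Prod.map φ id) := by
  simp only [msgMS, Multiset.map_map]
  rfl

theorem msgMS_eq_of_comp_eq (G : KG V R D) {φ : X → Y} {s : Set X} (hφ : s.InjOn φ)
    {g g' : V → X} (hg : ∀ w, g w ∈ s) (hg' : ∀ w, g' w ∈ s) {v v' : V}
    (h : G.msgMS (φ ∘ g) v = G.msgMS (φ ∘ g') v') : G.msgMS g v = G.msgMS g' v' := by
  have hinj : (s ×ˢ Set.univ : Set (X × R)).InjOn (Prod.map φ id) := by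
    rintro ⟨x, r⟩ ⟨hx, -⟩ ⟨y, r'⟩ ⟨hy, -⟩ hxy
    simp only [Prod.map, Prod.mk.injEq] at hxy ⊢
    exact ⟨hφ hx hy hxy.1, hxy.2⟩
  have hmem {g : V → X} (hg : ∀ w, g w ∈ s) (v : V) : ∀ a ∈ G.msgMS g v, a ∈ s ×ˢ Set.univ := by
    simp only [msgMS, Multiset.mem_map]
    rintro _ ⟨e, -, rfl⟩
    exact ⟨hg _, trivial⟩
  exact Multiset.eq_of_map_eq_of_injOn hinj (hmem hg v) (hmem hg' v')
    (by rwa [← msgMS_comp, ← msgMS_comp])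

end KG

section rawl2

variable {V R D D₂ : Type} [DecidableEq V] (G : KG V R D) (η : V → V → D₂)

theorem rawl2_succ_eq_iff {t : ℕ} {u v u' v' : V} :
    rawl2 G η (t + 1) u v = rawl2 G η (t + 1) u' v' ↔
      rawl2 G η t u v = rawl2 G η t u' v' ∧
        G.msgMS (rawl2 G η t u) v = G.msgMS (rawl2 G η t u') v' :=
  Prod.ext_iff

theorem msgMS_rawl2_eq_of_succ {t : ℕ} {u v u' v' : V}
    (h : G.msgMS (rawl2 G η (t + 1) u) v = G.msgMS (rawl2 G η (t + 1) u') v') :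
    G.msgMS (rawl2 G η t u) v = G.msgMS (rawl2 G η t u') v' := by
  have h₁ := congrArg (Multiset.map (Prod.map (fun c : Color1 D₂ R (t + 1) => c.1) id)) h
  rwa [← KG.msgMS_comp, ← KG.msgMS_comp] at h₁

theorem rawl2_eq_of_msgMS_eq {s t : ℕ} (hst : s ≤ t) {u v u' v' : V}
    (hs : rawl2 G η s u v = rawl2 G η s u' v')
    (hmsg : G.msgMS (rawl2 G η t u) v = G.msgMS (rawl2 G η t u') v') :
    rawl2 G η t u v = rawl2 G η t u' v' := by
  induction t, hst using Nat.le_induction with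
  | base => exact hs
  | succ t _ ih =>
    have hmsg' := msgMS_rawl2_eq_of_succ G η hmsg
    exact (rawl2_succ_eq_iff G η).2 ⟨ih hmsg', hmsg'⟩

end rawl2

section rawl2Net

variable {V R D D₂ : Type} [DecidableEq V]

noncomputable def rawl2Net (G : KG V R D) (η : V → V → D₂) (f : ℕ → ℕ) (hf_mono : Monotone f)
    (hf_le : ∀ t, f t ≤ t) (e : (t : ℕ) → Color1 D₂ R t → ℝ) : CMPNN R (fun _ => 1) where
  f := f
  f_mono := hf_mono
  f_le := hf_le
  M := fun _ => ℝ × R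
  A := fun _ => Multiset (ℝ × R)
  msg := fun _ r x _ => (x 0, r)
  agg := fun _ m => m
  -- only inputs realised by some pair `p` matter; `Function.extend` sends the others to `0`
  upd := fun t x m =>
    Function.extend
      (fun p : V × V => (e (f t) (rawl2 G η (f t) p.1 p.2), G.msgMS (e t ∘ rawl2 G η t p.1) p.2))
      (fun p _ => e (t + 1) (rawl2 G η (t + 1) p.1 p.2)) 0 (x 0, m)

theorem rawl2Net_h (G : KG V R D) (η : V → V → D₂) (q : R) (f : ℕ → ℕ) (hf_mono : Monotone f)
    (hf_le : ∀ t, f t ≤ t) (e : (t : ℕ) → Color1 D₂ R t → ℝ)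
    (he : ∀ t, (Set.range (Function.uncurry (rawl2 G η t))).InjOn (e t)) (t : ℕ) (u v : V) :
    (rawl2Net G η f hf_mono hf_le e).h G q (fun u v _ _ => e 0 (rawl2 G η 0 u v)) t u v =
      fun _ => e t (rawl2 G η t u v) := by
  induction t using Nat.strong_induction_on generalizing u v with
  | _ t ih =>
  rcases t with _ | t
  · rw [CMPNN.h]
  rw [CMPNN.h]
  dsimp only
  rw [ih _ (Nat.lt_succ_of_le ((rawl2Net G η f hf_mono hf_le e).f_le t))]
  simp only [ih t t.lt_succ_self]
  have hfactors : Function.FactorsThrough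
      (fun (p : V × V) (_ : Fin 1) => e (t + 1) (rawl2 G η (t + 1) p.1 p.2))
      (fun p : V × V => (e (f t) (rawl2 G η (f t) p.1 p.2), G.msgMS (e t ∘ rawl2 G η t p.1) p.2)) := by
    rintro ⟨u, v⟩ ⟨u', v'⟩ h
    simp only [Prod.mk.injEq] at h
    have hs : rawl2 G η (f t) u v = rawl2 G η (f t) u' v' :=
      he (f t) ⟨(u, v), rfl⟩ ⟨(u', v'), rfl⟩ h.1
    have hmsg : G.msgMS (rawl2 G η t u) v = G.msgMS (rawl2 G η t u') v' :=
      G.msgMS_eq_of_comp_eq (he t) (fun w => ⟨(u, w), rfl⟩) (fun w => ⟨(u', w), rfl⟩) h.2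
    dsimp only
    rw [(rawl2_succ_eq_iff G η).2 ⟨rawl2_eq_of_msgMS_eq G η (hf_le t) hs hmsg, hmsg⟩]
  exact hfactors.extend_apply 0 (u, v)

end rawl2Net

theorem cmpnn_matches_rawl2_general {V R D D₂ : Type} [Fintype V] [DecidableEq V]
    (G : KG V R D) (η : V → V → D₂)
    (q : R) (T : ℕ) (f : ℕ → ℕ) (hf_mono : Monotone f) (hf_le : ∀ t, f t ≤ t) :
    ∃ (d : ℕ → ℕ) (N : CMPNN R d) (δ : V → V → R → Fin (d 0) → ℝ),
      N.f = f ∧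
      ∀ t ≤ T, ∀ u v u' v' : V,
        rawl2 G η t u v = rawl2 G η t u' v' ↔
          N.h G q δ t u v = N.h G q δ t u' v' := by
  choose e he using fun t =>
    Set.countable_iff_exists_injOn.1 (Set.finite_range (Function.uncurry (rawl2 G η t))).countable
  let code (t : ℕ) (c : Color1 D₂ R t) : ℝ := e t c
  have hcode t : (Set.range (Function.uncurry (rawl2 G η t))).InjOn (code t) :=
    (Nat.cast_injective (R := ℝ)).comp_injOn (he t)
  refine ⟨fun _ => 1, rawl2Net G η f hf_mono hf_le code, fun u v _ _ => code 0 (rawl2 G η 0 u v),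
    rfl, fun t _ u v u' v' => ?_⟩
  rw [rawl2Net_h G η q f hf_mono hf_le code hcode, rawl2Net_h G η q f hf_mono hf_le code hcode]
  exact ⟨fun h => by rw [h], fun h => hcode t ⟨(u, v), rfl⟩ ⟨(u', v'), rfl⟩ (congrFun h 0)⟩

/-- Let `G` be a knowledge graph with pairwise coloring `η` satisfying
target node distinguishability and let `q ∈ R`. For every `T ≥ 0` and every history
function `f`, there is a C-MPNN with `T` layers and history function `f` such that for
all `0 ≤ t ≤ T` the coloring `rawl₂^(t)` is equivalent to `h_q^(t)`. -/
theorem cmpnn_matches_rawl2 {V R D D₂ : Type} [Fintype V] [DecidableEq V] [DecidableEq R]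
    (G : KG V R D) (η : V → V → D₂)
    (hη : ∀ u v : V, u ≠ v → η u u ≠ η u v)
    (q : R) (T : ℕ) (f : ℕ → ℕ) (hf_mono : Monotone f) (hf_le : ∀ t, f t ≤ t) :
    ∃ (d : ℕ → ℕ) (N : CMPNN R d) (δ : V → V → R → Fin (d 0) → ℝ),
      N.f = f ∧
      ∀ t ≤ T, ∀ u v u' v' : V,
        rawl2 G η t u v = rawl2 G η t u' v' ↔
          N.h G q δ t u v = N.h G q δ t u' v' :=
  cmpnn_matches_rawl2_general G η q T f hf_mono hf_le
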